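/- arXiv:1608.04191 — 2 statements merged into one kernel-verified Lean document; each statement's English description precedes it below -/
import Mathlib

section
/- Let A be an abelian category and let F, G, E be (cochain) complexes in A. Suppose f : F ⟶ G and g : E ⟶ G are quasi-isomorphisms of complexes. Then there exists a complex H in A together with quasi-isomorphisms α : H ⟶ F and β : H ⟶ E such that the two composites f ∘ α and g ∘ β are homotopic (i.e. the square commutes up to chain homotopy). One may take H to be the shift by −1 of the mapping cone of the morphism E ⟶ cone(f) sending x to (0, g(x)). -/
/-!
Pass to the homotopy category, where the cone triangles of `f` and of `ψ := g ≫ inr f` are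
distinguished and quasi-isomorphisms are the morphisms with acyclic cone. Rotating the triangle
of `ψ` gives `b : cone(ψ)[-1] ⟶ E` with `b ≫ ψ = 0`, so `b ≫ g` factors through `f` by exactness
of the triangle of `f`; `b` is a quasi-isomorphism because its cone is `cone(f)`, which is acyclic.
Lifting back to complexes, equality in the homotopy category is the required homotopy, and `α`
is a quasi-isomorphism by two-out-of-three.
-/

open CategoryTheory CochainComplex

namespace HomotopyCategory

open Pretriangulated

variable {A : Type*} [Category A] [Abelian A]

lemma quotient_map_mem_trW_subcategoryAcyclic_iff {K L : CochainComplex A ℤ} (φ : K ⟶ L) :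
    (subcategoryAcyclic A).trW ((quotient A _).map φ) ↔ QuasiIso φ := by
  rw [← quasiIso_eq_trW_subcategoryAcyclic, quotient_map_mem_quasiIso_iff,
    HomologicalComplex.mem_quasiIso_iff]

lemma quotient_obj_mappingCone_mem_subcategoryAcyclic {K L : CochainComplex A ℤ} (φ : K ⟶ L)
    [QuasiIso φ] : subcategoryAcyclic A ((quotient A _).obj (mappingCone φ)) :=
  (ObjectProperty.trW_iff_of_distinguished _ _ (mappingCone_triangleh_distinguished φ)).1
    ((quotient_map_mem_trW_subcategoryAcyclic_iff φ).2 inferInstance)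

variable {E F G : CochainComplex A ℤ} (f : F ⟶ G) (g : E ⟶ G)

lemma exists_comp_quotient_map_eq_invRotate_mor₁_comp :
    ∃ a : ((quotient A _).obj (mappingCone (g ≫ mappingCone.inr f)))⟦(-1 : ℤ)⟧ ⟶
        (quotient A _).obj F,
      a ≫ (quotient A _).map f =
        (mappingCone.triangleh (g ≫ mappingCone.inr f)).invRotate.mor₁ ≫ (quotient A _).map g := by
  obtain ⟨a, ha⟩ := Triangle.coyoneda_exact₂ _ (mappingCone_triangleh_distinguished f)
      ((mappingCone.triangleh (g ≫ mappingCone.inr f)).invRotate.mor₁ ≫ (quotient A _).map g)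
      ((Category.assoc _ _ _).trans (comp_distTriang_mor_zero₁₂ _
        (inv_rot_of_distTriang _ (mappingCone_triangleh_distinguished _))))
  exact ⟨a, ha.symm⟩

lemma invRotate_mor₁_mappingCone_triangleh_mem_trW [QuasiIso f] :
    (subcategoryAcyclic A).trW (mappingCone.triangleh (g ≫ mappingCone.inr f)).invRotate.mor₁ :=
  ObjectProperty.trW.mk _ (inv_rot_of_distTriang _ (mappingCone_triangleh_distinguished _))
    (quotient_obj_mappingCone_mem_subcategoryAcyclic f)

end HomotopyCategory

open HomotopyCategory in
/-- If `f : F ⟶ G` and `g : E ⟶ G` are quasi-isomorphisms of cochain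
complexes in an abelian category, then there are quasi-isomorphisms `α : H ⟶ F` and
`β : H ⟶ E` with `α ≫ f` homotopic to `β ≫ g`, where one may take
`H := (mappingCone (g ≫ mappingCone.inr f))⟦(-1 : ℤ)⟧`. -/
theorem stmt0 {A : Type*} [Category A] [Abelian A]
    {E F G : CochainComplex A ℤ} (f : F ⟶ G) (g : E ⟶ G)
    [QuasiIso f] [QuasiIso g] :
    ∃ (H : CochainComplex A ℤ) (α : H ⟶ F) (β : H ⟶ E),
      QuasiIso α ∧ QuasiIso β ∧ Nonempty (Homotopy (α ≫ f) (β ≫ g)) ∧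
      Nonempty (H ≅ (mappingCone (g ≫ mappingCone.inr f))⟦(-1 : ℤ)⟧) := by
  let Q := quotient A (ComplexShape.up ℤ)
  obtain ⟨a, ha⟩ := exists_comp_quotient_map_eq_invRotate_mor₁_comp f g
  let e := (Q.commShiftIso (-1 : ℤ)).app (mappingCone (g ≫ mappingCone.inr f))
  obtain ⟨α, hα⟩ : ∃ α : _ ⟶ F, Q.map α = e.hom ≫ a := Q.map_surjective _
  obtain ⟨β, hβ⟩ : ∃ β : _ ⟶ E, Q.map β =
      e.hom ≫ (mappingCone.triangleh (g ≫ mappingCone.inr f)).invRotate.mor₁ :=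
    Q.map_surjective _
  have hαβ : Q.map (α ≫ f) = Q.map (β ≫ g) := by
    rw [Q.map_comp, Q.map_comp, hα, hβ, Category.assoc, ha]
    exact (Category.assoc _ _ _).symm
  have hβq : QuasiIso β := by
    rw [← quotient_map_mem_trW_subcategoryAcyclic_iff, hβ]
    exact MorphismProperty.RespectsIso.precomp _ e.hom _
      (invRotate_mor₁_mappingCone_triangleh_mem_trW f g)
  have hαfq : QuasiIso (α ≫ f) := by
    rw [← quotient_map_mem_trW_subcategoryAcyclic_iff, hαβ,
      quotient_map_mem_trW_subcategoryAcyclic_iff]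
    infer_instance
  exact ⟨_, α, β, quasiIso_of_comp_right α f, hβq, ⟨homotopyOfEq _ _ hαβ⟩, ⟨Iso.refl _⟩⟩
end

section
/- (Lagrange inversion) Let A be a commutative ℚ-algebra, let g ∈ A[[u]] be a formal power series with constant coefficient g(0) = 1, and let h ∈ A[[u]] be the unique power series with zero constant term satisfying h(u·g(u)) = u (the compositional inverse of u·g(u)). Then for every natural number r, the coefficient of u^r in g(u)^{−(r+1)} equals (r+1) times the coefficient of u^{r+1} in h(u). -/
/-!
Put `f = X * g`, so that `G ^ (r + 1) = X ^ (r + 1) * f ^ (-(r + 1))`. Differentiating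
`∑ₙ hₙ fⁿ = X` gives `∑ₙ hₙ (fⁿ)' = 1` up to order `r`; multiplying by `G ^ (r + 1)` and taking
the coefficient of `X ^ r` turns each term into the residue of `(fⁿ)' * f ^ (-(r + 1))`. For
`n ≠ r + 1` this is `n / (n - r - 1)` times the derivative of `f ^ (n - r - 1)`, whose residue is
zero; for `n = r + 1` it is `(r + 1) * f' / f`, whose residue is `r + 1`.
-/

/-- Substitution of the family `a` of (multivariate) formal power series into the
multivariate formal power series `F`, defined coefficientwise via truncation.
When every `a i` has zero constant coefficient this computes the usual composition
(substitution) of formal power series; in particular, for `τ = σ = Unit` it is the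
composition `F ∘ a` of one-variable formal power series. -/
noncomputable def msubst {τ σ A : Type*} [Fintype τ] [CommRing A]
    (a : τ → MvPowerSeries σ A) (F : MvPowerSeries τ A) : MvPowerSeries σ A :=
  fun d => letI := Classical.decEq τ; MvPowerSeries.coeff d
    (MvPolynomial.eval₂ ((MvPowerSeries.C (σ := σ) (R := A))) a
      (MvPowerSeries.trunc A
        (Finsupp.equivFunOnFinite.symm fun _ => (d.sum fun _ n => n) + 1) F))

open PowerSeries Finset

theorem MvPowerSeries.trunc_unit_eq_sum_monomial {A : Type*} [CommRing A] [DecidableEq Unit]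
    (F : A⟦X⟧) (N : ℕ) :
    MvPowerSeries.trunc A (Finsupp.equivFunOnFinite.symm fun _ => N + 1) F =
      ∑ n ∈ range (N + 1),
        MvPolynomial.monomial (Finsupp.single () n) (PowerSeries.coeff n F) := by
  ext d
  obtain ⟨k, rfl⟩ : ∃ k, d = Finsupp.single () k := ⟨d (), by ext; simp⟩
  have hN : (Finsupp.equivFunOnFinite.symm fun _ => N + 1 : Unit →₀ ℕ) =
      Finsupp.single () (N + 1) := by ext; simp
  have hlt : Finsupp.single () k < Finsupp.single () (N + 1) ↔ k ≤ N := by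
    rw [lt_iff_le_not_ge]; simp only [Finsupp.single_le_single]; omega
  rw [MvPowerSeries.coeff_trunc, hN]
  simp only [hlt]
  simp [MvPolynomial.coeff_sum, MvPolynomial.coeff_monomial]

namespace PowerSeries

variable {A : Type*} [CommRing A]

theorem coeff_msubst_unit (p F : A⟦X⟧) (N : ℕ) :
    coeff N (msubst (fun _ : Unit => p) F) = ∑ n ∈ range (N + 1), coeff n F * coeff N (p ^ n) := by
  have hN : ((Finsupp.single () N : Unit →₀ ℕ).sum fun _ n => n) = N := by simp
  change MvPowerSeries.coeff _ _ = _
  rw [MvPowerSeries.coeff_apply, msubst, hN]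
  -- `simp`, not `rw`: the `DecidableEq Unit` instance inside `msubst` is `Classical.decEq`.
  simp only [MvPowerSeries.trunc_unit_eq_sum_monomial]
  rw [MvPolynomial.eval₂_sum, map_sum]
  refine sum_congr rfl fun n _ => ?_
  rw [MvPolynomial.eval₂_monomial, Finsupp.prod_single_index (by exact pow_zero p)]
  exact coeff_C_mul _ _ _

theorem coeff_msubst_of_constantCoeff_eq_zero {p : A⟦X⟧} (hp : constantCoeff p = 0) (F : A⟦X⟧)
    {N M : ℕ} (hNM : N ≤ M) :
    coeff N (msubst (fun _ : Unit => p) F) = ∑ n ∈ range (M + 1), coeff n F * coeff N (p ^ n) := by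
  rw [coeff_msubst_unit]
  refine sum_subset (range_subset_range.mpr (by omega)) fun n _ hn => ?_
  have hNn : (N : ℕ∞) < n := by simp only [mem_range, not_lt] at hn; exact_mod_cast hn
  rw [coeff_of_lt_order N (hNn.trans_le (le_order_pow_of_constantCoeff_eq_zero n hp)), mul_zero]

theorem coeff_derivative_mul_eq_of_coeff_eq {P Q : A⟦X⟧} {n : ℕ}
    (hPQ : ∀ m ≤ n + 1, coeff m P = coeff m Q) (c : A⟦X⟧) :
    coeff n (d⁄dX A P * c) = coeff n (d⁄dX A Q * c) := by
  simp only [coeff_mul]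
  refine sum_congr rfl fun x hx => ?_
  have := Finset.HasAntidiagonal.mem_antidiagonal.mp hx
  rw [coeff_derivative, coeff_derivative, hPQ _ (by omega)]

theorem coeff_succ_pow_succ [IsAddTorsionFree A] (G : A⟦X⟧) (b : ℕ) :
    coeff (b + 1) (G ^ (b + 1)) = coeff b (G ^ b * d⁄dX A G) := by
  have h := coeff_derivative (G ^ (b + 1)) b
  rw [derivative_pow, Nat.add_sub_cancel, mul_assoc, ← map_natCast (C (R := A)), coeff_C_mul] at h
  apply nsmul_right_injective b.succ_ne_zero
  simp only [nsmul_eq_mul]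
  push_cast at h ⊢
  linear_combination -h

theorem derivative_mul_sq_of_mul_eq_one {g G : A⟦X⟧} (hG : g * G = 1) :
    d⁄dX A g * G ^ 2 = -d⁄dX A G := by
  have h := congrArg (d⁄dX A) hG
  rw [Derivation.leibniz, derivative_one, smul_eq_mul, smul_eq_mul] at h
  linear_combination G * h - d⁄dX A G * hG

theorem coeff_pow_mul_derivative_mul_pow [IsAddTorsionFree A] {g G : A⟦X⟧} (hG : g * G = 1)
    {a r : ℕ} (ha : a ≤ r) :
    coeff r ((X * g) ^ a * d⁄dX A (X * g) * G ^ (r + 1)) = if a = r then 1 else 0 := by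
  obtain ⟨b, rfl⟩ := Nat.exists_eq_add_of_le ha
  have hGa : (g * G) ^ a = 1 := by rw [hG, one_pow]
  have hGa' : (g * G) ^ (a + 1) = 1 := by rw [hG, one_pow]
  have key : (X * g) ^ a * d⁄dX A (X * g) * G ^ (a + b + 1) =
      X ^ a * (G ^ b + X * (d⁄dX A g * G ^ (b + 1))) := by
    rw [Derivation.leibniz, derivative_X, smul_eq_mul, smul_eq_mul]
    linear_combination (X ^ (a + 1) * d⁄dX A g * G ^ (b + 1)) * hGa + (X ^ a * G ^ b) * hGa'
  rw [key, add_comm a b, coeff_X_pow_mul]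
  cases b with
  | zero => simp
  | succ c =>
    have hsq : d⁄dX A g * G ^ (c + 2) = -(G ^ c * d⁄dX A G) := by
      rw [pow_add, mul_left_comm, derivative_mul_sq_of_mul_eq_one hG, mul_neg]
    rw [hsq, mul_neg, ← sub_eq_add_neg, map_sub, coeff_succ_X_mul, coeff_succ_pow_succ, sub_self,
      if_neg (by omega)]

theorem coeff_derivative_pow_mul_pow [IsAddTorsionFree A] {g G : A⟦X⟧} (hG : g * G = 1)
    {n r : ℕ} (hn : n ≤ r + 1) :
    coeff r (d⁄dX A ((X * g) ^ n) * G ^ (r + 1)) = if n = r + 1 then (r + 1 : A) else 0 := by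
  cases n with
  | zero => simp
  | succ a =>
    rw [derivative_pow, Nat.add_sub_cancel, mul_assoc, mul_assoc, ← map_natCast (C (R := A)),
      coeff_C_mul, ← mul_assoc, coeff_pow_mul_derivative_mul_pow hG (by omega : a ≤ r)]
    by_cases har : a = r <;> simp [har]

end PowerSeries

theorem stmt4_general {A : Type*} [CommRing A] [Algebra ℚ A]
    (g h G : PowerSeries A)
    (hG : g * G = 1)
    (hcomp : msubst (fun _ : Unit => PowerSeries.X * g) h = PowerSeries.X)
    (r : ℕ) :
    PowerSeries.coeff r (G ^ (r + 1)) =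
      ((r : A) + 1) * PowerSeries.coeff (r + 1) h := by
  have : IsAddTorsionFree A := .of_module_rat A
  set S := ∑ n ∈ range (r + 2), coeff n h • (X * g) ^ n
  have hS : ∀ m ≤ r + 1, coeff m S = coeff m X := fun m hm => by
    rw [← hcomp, coeff_msubst_of_constantCoeff_eq_zero (by simp) h hm, map_sum]
    simp only [coeff_smul, smul_eq_mul]
  calc coeff r (G ^ (r + 1))
      = coeff r (d⁄dX A S * G ^ (r + 1)) := by
        rw [coeff_derivative_mul_eq_of_coeff_eq hS, derivative_X, one_mul]
    _ = ∑ n ∈ range (r + 2), coeff n h * (if n = r + 1 then (r + 1 : A) else 0) := by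
        simp only [S, map_sum, Derivation.map_smul, sum_mul, smul_mul_assoc, coeff_smul,
          smul_eq_mul]
        refine sum_congr rfl fun n hn => ?_
        rw [coeff_derivative_pow_mul_pow hG (mem_range_succ_iff.mp hn)]
    _ = (r + 1) * coeff (r + 1) h := by simp [mul_comm]

/-- **Lagrange inversion.** Let `A` be a commutative `ℚ`-algebra,
`g ∈ A⟦u⟧` with `g(0) = 1`, and let `h` be the power series with zero constant term
such that `h(u·g(u)) = u`. If `G` is the multiplicative inverse of `g`, then for every
`r : ℕ`, the coefficient of `u^r` in `G^(r+1) = g^{-(r+1)}` equals `(r+1)` times the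
coefficient of `u^(r+1)` in `h`. -/
theorem stmt4 {A : Type*} [CommRing A] [Algebra ℚ A]
    (g h G : PowerSeries A)
    (hg : PowerSeries.constantCoeff g = 1)
    (hG : g * G = 1)
    (hh : PowerSeries.constantCoeff h = 0)
    (hcomp : msubst (fun _ : Unit => PowerSeries.X * g) h = PowerSeries.X)
    (r : ℕ) :
    PowerSeries.coeff r (G ^ (r + 1)) =
      ((r : A) + 1) * PowerSeries.coeff (r + 1) h :=
  stmt4_general g h G hG hcomp r
end
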